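/- Let δ be an initial distribution with support L and τ a strategy of player 2 such that γ₁(δ,σ,τ) = 0 for every strategy σ of player 1 (i.e., τ and δ are almost-surely winning for player 2). Then for every strategy σ, every n ≥ 1 and every play (k₁,c₁,d₁,…,kₙ₊₁) of length n+1 with positive probability under δ, σ, τ, the support B₂(L,d₁,…,dₙ) is almost-surely winning for player 2. -/

import Mathlib

open scoped Classical

noncomputable section

/-- A probability distribution on a finite type, given by a nonnegative
real-valued density summing to `1`. -/
structure FDist (X : Type*) [Fintype X] where
  f : X → ℝ
  nonneg : ∀ x, 0 ≤ f x
  sum_one : ∑ x, f x = 1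

/-- The support of a distribution: the set of points with positive probability. -/
def FDist.support {X : Type*} [Fintype X] (δ : FDist X) : Finset X :=
  Finset.univ.filter fun x => 0 < δ.f x

/-- The uniform distribution on a nonempty finite set. -/
def uniform {X : Type*} [Fintype X] (L : Finset X) (hL : L.Nonempty) : FDist X where
  f x := if x ∈ L then (L.card : ℝ)⁻¹ else 0
  nonneg x := by split_ifs <;> positivity
  sum_one := by
    rw [Finset.sum_ite_mem, Finset.univ_inter, Finset.sum_const, nsmul_eq_mul,
      mul_inv_cancel₀]
    exact_mod_cast (Finset.card_pos.mpr hL).ne'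

/-- Uniform distribution on `L`, defaulting to the uniform distribution on the
whole type when `L` is empty. -/
def uniformD {X : Type*} [Fintype X] [Nonempty X] (L : Finset X) : FDist X :=
  if h : L.Nonempty then uniform L h else uniform Finset.univ Finset.univ_nonempty

/-- The Dirac distribution on a point. -/
def dirac {X : Type*} [Fintype X] (x : X) : FDist X where
  f y := if y = x then 1 else 0
  nonneg y := by by_cases h : y = x <;> simp [h]
  sum_one := by simp

/-- A stochastic game with partial observation on both sides and a reachability
objective for player 1: states `K`, actions `I`, `J`, signals `C`, `D`, target
states `T`, transition probabilities `p`, and actions encoded in signals via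
`act₁`, `act₂`. -/
structure Game (K I J C D : Type*) [Fintype K] [Fintype I] [Fintype J] [Fintype C] [Fintype D] where
  T : Finset K
  p : K → I → J → C × D × K → ℝ
  p_nonneg : ∀ k i j x, 0 ≤ p k i j x
  p_sum : ∀ k i j, ∑ x : C × D × K, p k i j x = 1
  act₁ : C → I
  act₂ : D → J
  act_compat : ∀ k i j c d l, 0 < p k i j (c, d, l) → i = act₁ c ∧ j = act₂ d

/-- A (behavioral) strategy of player 1: a distribution on actions for each
finite sequence of received signals. -/
abbrev Strategy1 (I C : Type*) [Fintype I] : Type _ := List C → FDist I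

/-- A (behavioral) strategy of player 2. -/
abbrev Strategy2 (J D : Type*) [Fintype J] : Type _ := List D → FDist J

/-- A play with `n+1` states: the initial state followed by `n` steps, each
consisting of a signal for player 1, a signal for player 2 and the next state. -/
structure Hist (K C D : Type*) (n : ℕ) where
  first : K
  steps : Fin n → C × D × K

instance (K C D : Type*) [Fintype K] [Fintype C] [Fintype D] (n : ℕ) :
    Fintype (Hist K C D n) :=
  Fintype.ofEquiv (K × (Fin n → C × D × K))
    { toFun := fun x => ⟨x.1, x.2⟩
      invFun := fun h => (h.first, h.steps)
      left_inv := fun _ => rfl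
      right_inv := fun _ => rfl }

namespace Hist

variable {K C D : Type*}

/-- The last state of a play. -/
def last : ∀ {n : ℕ}, Hist K C D n → K
  | 0, h => h.first
  | n + 1, h => (h.steps (Fin.last n)).2.2

/-- The play obtained by removing the last step. -/
def init {n : ℕ} (h : Hist K C D (n + 1)) : Hist K C D n :=
  ⟨h.first, fun m => h.steps m.castSucc⟩

/-- The `m`-th state of a play, `0`-indexed: `state h 0` is the initial state
(called `k₁` in `1`-indexed notation). -/
def state {n : ℕ} (h : Hist K C D n) (m : Fin (n + 1)) : K :=
  if hm : m.val = 0 then h.first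
  else (h.steps ⟨m.val - 1, by have := m.isLt; omega⟩).2.2

/-- The sequence of signals received by player 1 along the play. -/
def sig1 {n : ℕ} (h : Hist K C D n) : List C := List.ofFn fun m => (h.steps m).1

/-- The sequence of signals received by player 2 along the play. -/
def sig2 {n : ℕ} (h : Hist K C D n) : List D := List.ofFn fun m => (h.steps m).2.1

/-- The play visits the target set `T`. -/
def visits (T : Finset K) {n : ℕ} (h : Hist K C D n) : Prop :=
  ∃ m : Fin (n + 1), h.state m ∈ T

end Hist

namespace Game

variable {K I J C D : Type*} [Fintype K] [Fintype I] [Fintype J] [Fintype C] [Fintype D]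

/-- The probability of a given play of `n` steps, under initial distribution `δ`
and strategies `σ`, `τ`. -/
def playProb (G : Game K I J C D) (δ : FDist K) (σ : Strategy1 I C) (τ : Strategy2 J D) :
    ∀ n : ℕ, Hist K C D n → ℝ
  | 0, h => δ.f h.first
  | n + 1, h =>
      G.playProb δ σ τ n h.init *
        ∑ i : I, ∑ j : J,
          (σ h.init.sig1).f i * (τ h.init.sig2).f j *
            G.p h.init.last i j (h.steps (Fin.last n))

/-- The probability that a play with `n+1` states visits the target set. -/
def reachProb (G : Game K I J C D) (δ : FDist K) (σ : Strategy1 I C)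
    (τ : Strategy2 J D) (n : ℕ) : ℝ :=
  ∑ h : Hist K C D n, if h.visits G.T then G.playProb δ σ τ n h else 0

/-- The reachability probability `γ₁(δ,σ,τ)`: the supremum over horizons of the
probability that the play visits the target set. -/
def val (G : Game K I J C D) (δ : FDist K) (σ : Strategy1 I C) (τ : Strategy2 J D) : ℝ :=
  ⨆ n : ℕ, G.reachProb δ σ τ n

/-- `δ` is almost-surely winning for player 1. -/
def AlmostSureWin1 (G : Game K I J C D) (δ : FDist K) : Prop :=
  ∃ σ, ∀ τ, G.val δ σ τ = 1

/-- `δ` is positively winning for player 1. -/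
def PositiveWin1 (G : Game K I J C D) (δ : FDist K) : Prop :=
  ∃ σ, ∀ τ, 0 < G.val δ σ τ

/-- `δ` is positively winning for player 2. -/
def PositiveWin2 (G : Game K I J C D) (δ : FDist K) : Prop :=
  ∃ τ, ∀ σ, G.val δ σ τ < 1

/-- `δ` is surely (equivalently here, almost-surely) winning for player 2. -/
def SureWin2 (G : Game K I J C D) (δ : FDist K) : Prop :=
  ∃ τ, ∀ σ, G.val δ σ τ = 0

/-- One-step belief operator of player 1. -/
def B1 (G : Game K I J C D) (L : Finset K) (c : C) : Finset K :=
  Finset.univ.filter fun k => ∃ l ∈ L, ∃ d : D, 0 < G.p l (G.act₁ c) (G.act₂ d) (c, d, k)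

/-- One-step belief operator of player 2. -/
def B2 (G : Game K I J C D) (L : Finset K) (d : D) : Finset K :=
  Finset.univ.filter fun k => ∃ l ∈ L, ∃ c : C, 0 < G.p l (G.act₁ c) (G.act₂ d) (c, d, k)

/-- Belief of player 1 after a sequence of signals. -/
def B1seq (G : Game K I J C D) (L : Finset K) (cs : List C) : Finset K := cs.foldl G.B1 L

/-- Belief of player 2 after a sequence of signals. -/
def B2seq (G : Game K I J C D) (L : Finset K) (ds : List D) : Finset K := ds.foldl G.B2 L

/-- One-step pessimistic belief operator of player 1. -/
def B1p (G : Game K I J C D) (L : Finset K) (c : C) : Finset K := G.B1 (L \ G.T) c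

/-- One-step pessimistic belief operator of player 2. -/
def B2p (G : Game K I J C D) (L : Finset K) (d : D) : Finset K := G.B2 (L \ G.T) d

/-- Pessimistic belief of player 1 after a sequence of signals. -/
def B1pseq (G : Game K I J C D) (L : Finset K) (cs : List C) : Finset K := cs.foldl G.B1p L

/-- Pessimistic belief of player 2 after a sequence of signals. -/
def B2pseq (G : Game K I J C D) (L : Finset K) (ds : List D) : Finset K := ds.foldl G.B2p L

/-- The operator `Φ` on collections of subsets of `K ∖ T`. -/
def Phi (G : Game K I J C D) (𝓛 : Set (Finset K)) : Set (Finset K) :=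
  {L | L ∈ 𝓛 ∧ L ∩ G.T = ∅ ∧ ∃ j : J, ∀ d : D, G.act₂ d = j → G.B2 L d ∈ 𝓛}

theorem Phi_mono (G : Game K I J C D) : Monotone G.Phi := by
  intro A B hAB L hL
  obtain ⟨h1, h2, j, hj⟩ := hL
  exact ⟨hAB h1, h2, j, fun d hd => hAB (hj d hd)⟩

/-- `𝓛_∞`, the greatest fixpoint of `Φ`. -/
def Linf (G : Game K I J C D) : Set (Finset K) :=
  OrderHom.gfp ⟨G.Phi, G.Phi_mono⟩

/-- The winning condition of the `𝓛`-game for player 1, on a play with initial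
support `L`: some state `k_m` is a target state and all earlier pessimistic
beliefs of player 1 avoid `𝓛`. -/
def LWin (G : Game K I J C D) (𝓛 : Set (Finset K)) (L : Finset K) {n : ℕ}
    (h : Hist K C D n) : Prop :=
  ∃ m : Fin (n + 1), h.state m ∈ G.T ∧
    ∀ r : ℕ, 1 ≤ r → r ≤ m.val → G.B1pseq L (h.sig1.take r) ∉ 𝓛

/-- The payoff `γ₁^𝓛(δ,σ,τ)` of player 1 in the `𝓛`-game, for an initial
distribution `δ` with support `L`. -/
def Lval (G : Game K I J C D) (𝓛 : Set (Finset K)) (L : Finset K) (δ : FDist K)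
    (σ : Strategy1 I C) (τ : Strategy2 J D) : ℝ :=
  ⨆ n : ℕ, ∑ h : Hist K C D n, if G.LWin 𝓛 L h then G.playProb δ σ τ n h else 0

end Game

/-- The uniformly random strategy `σ_R` of player 1. -/
def randomStrat (I C : Type*) [Fintype I] [Nonempty I] : Strategy1 I C :=
  fun _ => uniform Finset.univ Finset.univ_nonempty

/-!
Let `h` be a play of positive probability and `k` a state of player 2's belief after `h`.
Some play `h₀` ending in `k` carries the same signals of player 2 as `h` and has positive
probability when player 1 plays uniformly at random. If the continuation of `τ` after these
signals lost with positive probability from `k` against some `σ`, then playing at random for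
`n` steps and then `σ` would reach the target with positive probability against `τ` from `δ`.
-/

lemma FDist.mem_support_iff {X : Type*} [Fintype X] (δ : FDist X) (x : X) :
    x ∈ δ.support ↔ 0 < δ.f x := by
  simp [FDist.support]

lemma uniformD_f_eq_zero {X : Type*} [Fintype X] [Nonempty X] {L : Finset X} (hL : L.Nonempty)
    {x : X} (hx : x ∉ L) : (uniformD L).f x = 0 := by
  simp [uniformD, hL, uniform, hx]

lemma randomStrat_pos {I C : Type*} [Fintype I] [Nonempty I] (cs : List C) (i : I) :
    0 < (randomStrat I C cs).f i := by
  simp [randomStrat, uniform, Fintype.card_pos]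

def spliceStrat {I C : Type*} [Fintype I] (n : ℕ) (σ₀ σ : Strategy1 I C) : Strategy1 I C :=
  fun cs => if cs.length < n then σ₀ cs else σ (cs.drop n)

lemma spliceStrat_of_length_lt {I C : Type*} [Fintype I] {n : ℕ} (σ₀ σ : Strategy1 I C)
    {cs : List C} (hcs : cs.length < n) : spliceStrat n σ₀ σ cs = σ₀ cs :=
  if_pos hcs

lemma spliceStrat_append {I C : Type*} [Fintype I] {n : ℕ} (σ₀ σ : Strategy1 I C)
    {cs : List C} (hcs : cs.length = n) : (fun l => spliceStrat n σ₀ σ (cs ++ l)) = σ := by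
  funext l
  simp [spliceStrat, ← hcs]

namespace Hist

variable {K C D : Type*} {n n' : ℕ}

def snoc (h : Hist K C D n) (x : C × D × K) : Hist K C D (n + 1) :=
  ⟨h.first, Fin.snoc h.steps x⟩

@[elab_as_elim]
def snocInduction {motive : ∀ n, Hist K C D n → Sort*}
    (zero : ∀ k, motive 0 ⟨k, Fin.elim0⟩)
    (snoc : ∀ n (h : Hist K C D n) x, motive n h → motive (n + 1) (h.snoc x)) :
    ∀ n (h : Hist K C D n), motive n h
  | 0, ⟨k, steps⟩ => by
    rw [Subsingleton.elim steps Fin.elim0]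
    exact zero k
  | n + 1, ⟨k, steps⟩ => by
    rw [← Fin.snoc_init_self steps]
    exact snoc n ⟨k, Fin.init steps⟩ _ (snocInduction zero snoc n _)

section snoc

variable (h : Hist K C D n) (x : C × D × K)

@[simp] lemma first_snoc : (h.snoc x).first = h.first := rfl

@[simp] lemma init_snoc : (h.snoc x).init = h := by
  simp [snoc, init, Fin.snoc_castSucc]

@[simp] lemma steps_snoc_last : (h.snoc x).steps (Fin.last n) = x := by
  simp [snoc]

@[simp] lemma last_snoc : (h.snoc x).last = x.2.2 := by
  simp [last]

@[simp] lemma sig1_snoc : (h.snoc x).sig1 = h.sig1 ++ [x.1] := by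
  simp only [sig1, snoc, List.ofFn_succ', Fin.snoc_castSucc, Fin.snoc_last, List.concat_eq_append]

@[simp] lemma sig2_snoc : (h.snoc x).sig2 = h.sig2 ++ [x.2.1] := by
  simp only [sig2, snoc, List.ofFn_succ', Fin.snoc_castSucc, Fin.snoc_last, List.concat_eq_append]

lemma state_snoc_castSucc (m : Fin (n + 1)) : (h.snoc x).state m.castSucc = h.state m := by
  by_cases hm : m.val = 0
  · simp [state, hm, snoc]
  · simp [state, hm, snoc, Fin.snoc, show m.val - 1 < n by omega]

lemma state_snoc_last : (h.snoc x).state (Fin.last (n + 1)) = x.2.2 := by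
  simp [state, snoc, Fin.snoc]

lemma visits_snoc {T : Finset K} : (h.snoc x).visits T ↔ h.visits T ∨ x.2.2 ∈ T := by
  simp only [visits, Fin.exists_fin_succ', state_snoc_castSucc, state_snoc_last]

end snoc

lemma init_snoc_self (h : Hist K C D (n + 1)) : h.init.snoc (h.steps (Fin.last n)) = h := by
  cases h
  simp only [init, snoc, Hist.mk.injEq, true_and]
  exact Fin.snoc_init_self _

def snocEquiv (K C D : Type*) (n : ℕ) : Hist K C D n × (C × D × K) ≃ Hist K C D (n + 1) where
  toFun p := p.1.snoc p.2
  invFun h := (h.init, h.steps (Fin.last n))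
  left_inv p := by simp
  right_inv := init_snoc_self

def zeroEquiv (K C D : Type*) : K ≃ Hist K C D 0 where
  toFun k := ⟨k, Fin.elim0⟩
  invFun h := h.first
  left_inv _ := rfl
  right_inv h := by cases h; simp [Subsingleton.elim _ (Fin.elim0 : Fin 0 → C × D × K)]

@[simp] lemma length_sig1 (h : Hist K C D n) : h.sig1.length = n := by simp [sig1]

lemma visits_of_last_mem {T : Finset K} (h : Hist K C D n) (hT : h.last ∈ T) : h.visits T := by
  induction n, h using snocInduction with
  | zero k => exact ⟨0, hT⟩
  | snoc n h x _ => exact (visits_snoc h x).2 (Or.inr (by simpa using hT))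

def append (h₀ : Hist K C D n) (h : Hist K C D n') : Hist K C D (n + n') :=
  ⟨h₀.first, Fin.append h₀.steps h.steps⟩

section append

variable (h₀ : Hist K C D n)

@[simp] lemma append_zero (k : K) : h₀.append ⟨k, Fin.elim0⟩ = h₀ := by
  simp [append, Fin.append_right_nil]

@[simp] lemma append_snoc (h : Hist K C D n') (x : C × D × K) :
    h₀.append (h.snoc x) = (h₀.append h).snoc x := by
  simp [append, snoc, Fin.append_snoc]

@[simp] lemma sig1_append (h : Hist K C D n') : (h₀.append h).sig1 = h₀.sig1 ++ h.sig1 := by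
  induction n', h using snocInduction with
  | zero k => simp [sig1]
  | snoc n' h x ih => simp [ih]

@[simp] lemma sig2_append (h : Hist K C D n') : (h₀.append h).sig2 = h₀.sig2 ++ h.sig2 := by
  induction n', h using snocInduction with
  | zero k => simp [sig2]
  | snoc n' h x ih => simp [ih]

lemma last_append (h : Hist K C D n') (hf : h.first = h₀.last) :
    (h₀.append h).last = h.last := by
  induction n', h using snocInduction with
  | zero k => simpa [last] using hf.symm
  | snoc n' h x _ => simp

lemma visits_append {T : Finset K} (h : Hist K C D n') (hf : h.first = h₀.last)
    (hv : h.visits T) : (h₀.append h).visits T := by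
  induction n', h using snocInduction with
  | zero k =>
    obtain ⟨m, hm⟩ := hv
    simpa using h₀.visits_of_last_mem (by simpa [← hf, Fin.fin_one_eq_zero m, state] using hm)
  | snoc n' h x ih =>
    rw [append_snoc, visits_snoc]
    exact ((visits_snoc h x).1 hv).imp (ih hf) id

end append

end Hist

namespace Game

variable {K I J C D : Type*} [Fintype K] [Fintype I] [Fintype J] [Fintype C] [Fintype D]
  (G : Game K I J C D)

def stepProb (a : FDist I) (b : FDist J) (k : K) (x : C × D × K) : ℝ :=
  ∑ i, ∑ j, a.f i * b.f j * G.p k i j x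

lemma stepProb_nonneg (a : FDist I) (b : FDist J) (k : K) (x : C × D × K) :
    0 ≤ G.stepProb a b k x :=
  Finset.sum_nonneg fun _ _ => Finset.sum_nonneg fun _ _ =>
    mul_nonneg (mul_nonneg (a.nonneg _) (b.nonneg _)) (G.p_nonneg _ _ _ _)

lemma sum_stepProb (a : FDist I) (b : FDist J) (k : K) : ∑ x, G.stepProb a b k x = 1 := by
  simp only [stepProb]
  rw [Finset.sum_comm]
  simp_rw [Finset.sum_comm (γ := C × D × K), ← Finset.mul_sum, G.p_sum, mul_one,
    ← Finset.mul_sum, b.sum_one, mul_one, a.sum_one]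

lemma stepProb_pos_iff (a : FDist I) (b : FDist J) (k : K) (x : C × D × K) :
    0 < G.stepProb a b k x ↔ 0 < a.f (G.act₁ x.1) ∧ 0 < b.f (G.act₂ x.2.1) ∧
      0 < G.p k (G.act₁ x.1) (G.act₂ x.2.1) x := by
  have hnn : ∀ i j, 0 ≤ a.f i * b.f j * G.p k i j x := fun i j =>
    mul_nonneg (mul_nonneg (a.nonneg _) (b.nonneg _)) (G.p_nonneg _ _ _ _)
  simp only [stepProb, Finset.mem_univ, true_and,
    Finset.sum_pos_iff_of_nonneg fun i _ => Finset.sum_nonneg fun j _ => hnn i j,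
    Finset.sum_pos_iff_of_nonneg fun j _ => hnn _ j]
  constructor
  · rintro ⟨i, j, hij⟩
    have hp := pos_of_mul_pos_right hij (mul_nonneg (a.nonneg _) (b.nonneg _))
    have hab := pos_of_mul_pos_left hij (G.p_nonneg _ _ _ _)
    obtain ⟨rfl, rfl⟩ := G.act_compat k i j x.1 x.2.1 x.2.2 hp
    exact ⟨pos_of_mul_pos_left hab (b.nonneg _), pos_of_mul_pos_right hab (a.nonneg _), hp⟩
  · rintro ⟨ha, hb, hp⟩
    exact ⟨_, _, mul_pos (mul_pos ha hb) hp⟩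

section Probability

variable (δ : FDist K) (σ : Strategy1 I C) (τ : Strategy2 J D) {n n' : ℕ}

@[simp] lemma playProb_zero (k : K) : G.playProb δ σ τ 0 ⟨k, Fin.elim0⟩ = δ.f k := rfl

lemma playProb_snoc (h : Hist K C D n) (x : C × D × K) :
    G.playProb δ σ τ (n + 1) (h.snoc x) =
      G.playProb δ σ τ n h * G.stepProb (σ h.sig1) (τ h.sig2) h.last x := by
  rw [playProb, Hist.init_snoc, Hist.steps_snoc_last]
  rfl

lemma playProb_nonneg (h : Hist K C D n) : 0 ≤ G.playProb δ σ τ n h := by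
  induction n, h using Hist.snocInduction with
  | zero k => exact δ.nonneg k
  | snoc n h x ih => rw [playProb_snoc]; exact mul_nonneg ih (G.stepProb_nonneg _ _ _ _)

lemma playProb_snoc_pos_iff (h : Hist K C D n) (x : C × D × K) :
    0 < G.playProb δ σ τ (n + 1) (h.snoc x) ↔
      0 < G.playProb δ σ τ n h ∧ 0 < G.stepProb (σ h.sig1) (τ h.sig2) h.last x := by
  rw [playProb_snoc]
  exact ⟨fun hp => ⟨pos_of_mul_pos_left hp (G.stepProb_nonneg _ _ _ _),
    pos_of_mul_pos_right hp (G.playProb_nonneg δ σ τ h)⟩, fun hp => mul_pos hp.1 hp.2⟩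

lemma sum_playProb (n : ℕ) : ∑ h : Hist K C D n, G.playProb δ σ τ n h = 1 := by
  induction n with
  | zero => rw [← (Hist.zeroEquiv K C D).sum_comp]; exact δ.sum_one
  | succ n ih =>
    rw [← (Hist.snocEquiv K C D n).sum_comp, Fintype.sum_prod_type]
    simp only [Hist.snocEquiv, Equiv.coe_fn_mk, playProb_snoc, ← Finset.mul_sum, sum_stepProb,
      mul_one, ih]

lemma reachProb_le_one (n : ℕ) : G.reachProb δ σ τ n ≤ 1 :=
  (G.sum_playProb δ σ τ n).le.trans' <| Finset.sum_le_sum fun h _ => by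
    split_ifs
    exacts [le_rfl, G.playProb_nonneg δ σ τ h]

lemma playProb_le_val (h : Hist K C D n) (hv : h.visits G.T) :
    G.playProb δ σ τ n h ≤ G.val δ σ τ :=
  calc G.playProb δ σ τ n h ≤ G.reachProb δ σ τ n := by
        refine (if_pos hv).symm.le.trans (Finset.single_le_sum (f := fun h : Hist K C D n =>
          if h.visits G.T then G.playProb δ σ τ n h else 0) (fun h _ => ?_) (Finset.mem_univ h))
        split_ifs
        exacts [G.playProb_nonneg δ σ τ h, le_rfl]
    _ ≤ G.val δ σ τ :=
        le_ciSup ⟨1, by rintro _ ⟨m, rfl⟩; exact G.reachProb_le_one δ σ τ m⟩ n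

lemma val_eq_zero_of_playProb_eq_zero
    (H : ∀ n (h : Hist K C D n), h.visits G.T → G.playProb δ σ τ n h = 0) :
    G.val δ σ τ = 0 := by
  have hreach : ∀ n, G.reachProb δ σ τ n = 0 := fun n =>
    Finset.sum_eq_zero fun h _ => by
      split_ifs with hv
      exacts [H n h hv, rfl]
  simp [val, hreach]

lemma playProb_congr {σ₁ σ₂ : Strategy1 I C}
    (hσ : ∀ cs : List C, cs.length < n → σ₁ cs = σ₂ cs) (h : Hist K C D n) :
    G.playProb δ σ₁ τ n h = G.playProb δ σ₂ τ n h := by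
  induction n, h using Hist.snocInduction with
  | zero k => rfl
  | snoc n h x ih =>
    rw [playProb_snoc, playProb_snoc, ih fun cs hcs => hσ cs (by omega),
      hσ h.sig1 (by simp)]

lemma playProb_eq_mul_playProb_dirac (h : Hist K C D n) :
    G.playProb δ σ τ n h = δ.f h.first * G.playProb (dirac h.first) σ τ n h := by
  induction n, h using Hist.snocInduction with
  | zero k => simp [dirac]
  | snoc n h x ih => rw [playProb_snoc, playProb_snoc, ih, Hist.first_snoc, mul_assoc]

lemma playProb_append (h₀ : Hist K C D n) (h : Hist K C D n') (hf : h.first = h₀.last) :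
    G.playProb δ σ τ (n + n') (h₀.append h) =
      G.playProb δ σ τ n h₀ *
        G.playProb (dirac h.first) (fun l => σ (h₀.sig1 ++ l)) (fun l => τ (h₀.sig2 ++ l))
          n' h := by
  induction n', h using Hist.snocInduction with
  | zero k => simp [dirac]
  | snoc n' h x ih =>
    rw [Hist.append_snoc]
    change G.playProb δ σ τ (n + n' + 1) ((h₀.append h).snoc x) = _
    rw [playProb_snoc, ih hf, playProb_snoc, Hist.sig1_append,
      Hist.sig2_append, h₀.last_append h hf, Hist.first_snoc, mul_assoc]

end Probability

section Belief

variable {δ : FDist K} {L : Finset K} {σ : Strategy1 I C} {τ : Strategy2 J D} {n n' : ℕ}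

lemma B2seq_concat (L : Finset K) (ds : List D) (d : D) :
    G.B2seq L (ds ++ [d]) = G.B2 (G.B2seq L ds) d := by
  simp [B2seq, List.foldl_append]

lemma last_mem_B2seq (hδ : δ.support ⊆ L) {h : Hist K C D n}
    (hp : 0 < G.playProb δ σ τ n h) : h.last ∈ G.B2seq L h.sig2 := by
  induction n, h using Hist.snocInduction with
  | zero k => simpa [B2seq, Hist.sig2, Hist.last] using hδ ((δ.mem_support_iff k).2 hp)
  | snoc n h x ih =>
    obtain ⟨hp, hstep⟩ := (G.playProb_snoc_pos_iff δ σ τ h x).1 hp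
    obtain ⟨-, -, hx⟩ := (G.stepProb_pos_iff _ _ _ _).1 hstep
    rw [Hist.sig2_snoc, B2seq_concat, Hist.last_snoc]
    exact Finset.mem_filter.2 ⟨Finset.mem_univ _, h.last, ih hp, x.1, hx⟩

lemma exists_playProb_randomStrat_pos [Nonempty I] (hL : L ⊆ δ.support) {h : Hist K C D n}
    (hp : 0 < G.playProb δ σ τ n h) {k : K} (hk : k ∈ G.B2seq L h.sig2) :
    ∃ h₀ : Hist K C D n, h₀.sig2 = h.sig2 ∧ h₀.last = k ∧
      0 < G.playProb δ (randomStrat I C) τ n h₀ := by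
  induction n, h using Hist.snocInduction generalizing k with
  | zero k₀ =>
    refine ⟨⟨k, Fin.elim0⟩, rfl, rfl, (δ.mem_support_iff k).1 (hL ?_)⟩
    simpa [B2seq, Hist.sig2] using hk
  | snoc n h x ih =>
    obtain ⟨hp, hstep⟩ := (G.playProb_snoc_pos_iff δ σ τ h x).1 hp
    obtain ⟨-, hτx, -⟩ := (G.stepProb_pos_iff _ _ _ _).1 hstep
    rw [Hist.sig2_snoc, B2seq_concat] at hk
    obtain ⟨-, l, hl, c, hlk⟩ := Finset.mem_filter.1 hk
    obtain ⟨h₀, hsig, rfl, hp₀⟩ := ih hp hl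
    refine ⟨h₀.snoc (c, x.2.1, k), by simp [hsig], by simp, ?_⟩
    rw [playProb_snoc_pos_iff, stepProb_pos_iff]
    exact ⟨hp₀, randomStrat_pos _ _, hsig ▸ hτx, hlk⟩

lemma playProb_dirac_eq_zero_of_visits (hτ : ∀ σ, G.val δ σ τ = 0) {σ₀ : Strategy1 I C}
    {h₀ : Hist K C D n} (hp : 0 < G.playProb δ σ₀ τ n h₀) (σ : Strategy1 I C)
    {h : Hist K C D n'} (hf : h.first = h₀.last) (hv : h.visits G.T) :
    G.playProb (dirac h.first) σ (fun l => τ (h₀.sig2 ++ l)) n' h = 0 := by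
  have hp' : 0 < G.playProb δ (spliceStrat n σ₀ σ) τ n h₀ := by
    rwa [G.playProb_congr δ τ fun cs hcs => spliceStrat_of_length_lt σ₀ σ hcs]
  have happ := G.playProb_append δ (spliceStrat n σ₀ σ) τ h₀ h hf
  rw [spliceStrat_append σ₀ σ h₀.length_sig1] at happ
  refine le_antisymm ?_ (G.playProb_nonneg _ _ _ h)
  have := G.playProb_le_val δ (spliceStrat n σ₀ σ) τ _ (h₀.visits_append h hf hv)
  rw [hτ, happ] at this
  exact nonpos_of_mul_nonpos_right this hp'

end Belief

end Game

variable {K I J C D : Type*} [Fintype K] [Fintype I] [Fintype J] [Fintype C] [Fintype D]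
  [Nonempty K] [Nonempty I] [Nonempty J] [Nonempty C] [Nonempty D]

/-- if `τ` is almost-surely winning for player 2 from `δ`, then along
any play of positive probability the belief of player 2 remains an almost-surely
winning support for player 2. -/
theorem belief2_stays_winning (G : Game K I J C D) (δ : FDist K) (L : Finset K)
    (hδ : δ.support = L) (τ : Strategy2 J D) (hτ : ∀ σ, G.val δ σ τ = 0) :
    ∀ (σ : Strategy1 I C) (n : ℕ), 1 ≤ n → ∀ h : Hist K C D n,
      0 < G.playProb δ σ τ n h →
      G.SureWin2 (uniformD (G.B2seq L h.sig2)) := by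
  intro σ n _ h hp
  have hne : (G.B2seq L h.sig2).Nonempty := ⟨h.last, G.last_mem_B2seq hδ.le hp⟩
  refine ⟨fun l => τ (h.sig2 ++ l), fun σ' =>
    G.val_eq_zero_of_playProb_eq_zero _ _ _ fun n' h' hv => ?_⟩
  rw [Game.playProb_eq_mul_playProb_dirac]
  by_cases hk : h'.first ∈ G.B2seq L h.sig2
  · obtain ⟨h₀, hsig, hlast, hp₀⟩ := G.exists_playProb_randomStrat_pos hδ.ge hp hk
    rw [← hsig, G.playProb_dirac_eq_zero_of_visits hτ hp₀ σ' hlast.symm hv, mul_zero]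
  · rw [uniformD_f_eq_zero hne hk, zero_mul]
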